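/- Let A and B be complex N×N matrices and let a₁ = 1/2 + i√3/6, b₀ = a₁/2, b₁ = 1/2. Then the symmetric-conjugate splitting operator S_h := exp(ih·conj(b₀)·B) · exp(ih·conj(a₁)·A) · exp(ih·b₁·B) · exp(ih·a₁·A) · exp(ih·b₀·B) is a third-order approximation to the exponential of i h (A + B): S_h = exp(ih(A+B)) + O(h^4) as h → 0. -/

import Mathlib

open Matrix Filter Asymptotics

section

attribute [local instance] Matrix.normedAddCommGroup Matrix.normedSpace

/-- The coefficient `a₁ = 1/2 + i √3/6`. -/
noncomputable def coeffA1 : ℂ := (1 / 2 : ℂ) + (Real.sqrt 3 / 6 : ℝ) * Complex.I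

/-- The coefficient `b₀ = a₁ / 2`. -/
noncomputable def coeffB0 : ℂ := coeffA1 / 2

/-- The coefficient `b₁ = 1/2`. -/
noncomputable def coeffB1 : ℂ := 1 / 2

end

section AuxAlg

open NormedSpace

variable {𝔸 : Type*} [NormedRing 𝔸] [NormedAlgebra ℂ 𝔸] [CompleteSpace 𝔸]

/-- Auxiliary: a product of three exponential factors with constant left factors. -/
noncomputable def sc15foo (A B' X Y Z : 𝔸) (z : ℂ) : 𝔸 :=
  X * exp (z • B') * (Y * exp (z • A)) * (Z * exp (z • B'))

lemma sc15foo_hasDerivAt (A B' X Y Z : 𝔸) (z : ℂ) :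
    HasDerivAt (sc15foo A B' X Y Z)
      (sc15foo A B' (X * B') Y Z z + sc15foo A B' X (Y * A) Z z +
        sc15foo A B' X Y (Z * B') z) z := by
  have h1 : HasDerivAt (fun w : ℂ => X * exp (w • B')) (X * (B' * exp (z • B'))) z :=
    (hasDerivAt_exp_smul_const' B' z).const_mul X
  have h2 : HasDerivAt (fun w : ℂ => Y * exp (w • A)) (Y * (A * exp (z • A))) z :=
    (hasDerivAt_exp_smul_const' A z).const_mul Y
  have h3 : HasDerivAt (fun w : ℂ => Z * exp (w • B')) (Z * (B' * exp (z • B'))) z :=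
    (hasDerivAt_exp_smul_const' B' z).const_mul Z
  have H := (h1.mul h2).mul h3
  convert H using 1
  · funext w; simp only [sc15foo, Pi.mul_apply]
  simp only [sc15foo, Pi.mul_apply]
  noncomm_ring

lemma sc15foo_zero (A B' X Y Z : 𝔸) : sc15foo A B' X Y Z 0 = X * Y * Z := by
  simp [sc15foo, exp_zero]

noncomputable def sc15Phi (A B' : 𝔸) : ℂ → 𝔸 := sc15foo A B' 1 1 1

noncomputable def sc15Phi1 (A B' : 𝔸) : ℂ → 𝔸 := fun z =>
  sc15foo A B' B' 1 1 z + sc15foo A B' 1 A 1 z + sc15foo A B' 1 1 B' z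

noncomputable def sc15Phi2 (A B' : 𝔸) : ℂ → 𝔸 := fun z =>
  (sc15foo A B' (B' * B') 1 1 z + sc15foo A B' B' A 1 z + sc15foo A B' B' 1 B' z) +
  (sc15foo A B' B' A 1 z + sc15foo A B' 1 (A * A) 1 z + sc15foo A B' 1 A B' z) +
  (sc15foo A B' B' 1 B' z + sc15foo A B' 1 A B' z + sc15foo A B' 1 1 (B' * B') z)

lemma sc15Phi_hasDerivAt (A B' : 𝔸) (z : ℂ) :
    HasDerivAt (sc15Phi A B') (sc15Phi1 A B' z) z := by
  have H := sc15foo_hasDerivAt A B' 1 1 1 z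
  simpa [sc15Phi, sc15Phi1, one_mul, mul_one] using H

lemma sc15Phi1_hasDerivAt (A B' : 𝔸) (z : ℂ) :
    HasDerivAt (sc15Phi1 A B') (sc15Phi2 A B' z) z := by
  have H := ((sc15foo_hasDerivAt A B' B' 1 1 z).add (sc15foo_hasDerivAt A B' 1 A 1 z)).add
      (sc15foo_hasDerivAt A B' 1 1 B' z)
  unfold sc15Phi1
  simpa [sc15Phi1, sc15Phi2, one_mul, mul_one, Pi.add_def] using H

noncomputable def sc15Psi (A B : 𝔸) : ℂ → 𝔸 := fun z =>
  sc15Phi A ((2⁻¹ : ℂ) • B) z - exp (z • (A + B))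

noncomputable def sc15Psi1 (A B : 𝔸) : ℂ → 𝔸 := fun z =>
  sc15Phi1 A ((2⁻¹ : ℂ) • B) z - (A + B) * exp (z • (A + B))

noncomputable def sc15Psi2 (A B : 𝔸) : ℂ → 𝔸 := fun z =>
  sc15Phi2 A ((2⁻¹ : ℂ) • B) z - (A + B) * ((A + B) * exp (z • (A + B)))

lemma sc15Psi_hasDerivAt (A B : 𝔸) (z : ℂ) : HasDerivAt (sc15Psi A B) (sc15Psi1 A B z) z :=
  (sc15Phi_hasDerivAt _ _ z).sub (hasDerivAt_exp_smul_const' (A + B) z)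

lemma sc15Psi1_hasDerivAt (A B : 𝔸) (z : ℂ) : HasDerivAt (sc15Psi1 A B) (sc15Psi2 A B z) z :=
  (sc15Phi1_hasDerivAt _ _ z).sub ((hasDerivAt_exp_smul_const' (A + B) z).const_mul (A + B))

lemma sc15Psi_zero (A B : 𝔸) : sc15Psi A B 0 = 0 := by
  simp [sc15Psi, sc15Phi, sc15foo_zero, exp_zero]

lemma sc15Psi1_zero (A B : 𝔸) : sc15Psi1 A B 0 = 0 := by
  simp only [sc15Psi1, sc15Phi1, sc15foo_zero, zero_smul, exp_zero, mul_one, one_mul]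
  module

lemma sc15Psi2_zero (A B : 𝔸) : sc15Psi2 A B 0 = 0 := by
  simp only [sc15Psi2, sc15Phi2, sc15foo_zero, zero_smul, exp_zero, mul_one, one_mul,
    smul_mul_assoc, mul_smul_comm, smul_smul]
  rw [show (A + B) * (A + B) = A * A + A * B + (B * A + B * B) by noncomm_ring]
  module

lemma sc15Psi_analyticAt (A B : 𝔸) : AnalyticAt ℂ (sc15Psi A B) 0 := by
  have hsm : ∀ M : 𝔸, AnalyticAt ℂ (fun z : ℂ => z • M) 0 :=
    fun M => analyticAt_id.smul analyticAt_const
  have hexp : ∀ M : 𝔸, AnalyticAt ℂ (fun z : ℂ => exp (z • M)) 0 := fun M => by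
    have h0 : AnalyticAt ℂ (exp : 𝔸 → 𝔸) ((0 : ℂ) • M) := by
      rw [zero_smul]
      exact NormedSpace.exp_analytic (𝕂 := ℂ) (0 : 𝔸)
    exact AnalyticAt.comp (f := fun z : ℂ => z • M) (g := (exp : 𝔸 → 𝔸)) h0 (hsm M)
  exact (((analyticAt_const.mul (hexp ((2⁻¹ : ℂ) • B))).mul
      (analyticAt_const.mul (hexp A))).mul
      (analyticAt_const.mul (hexp ((2⁻¹ : ℂ) • B)))).sub (hexp (A + B))

lemma sc15_comp {E : Type*} [NormedAddCommGroup E] {F : ℂ → E} {k : ℕ}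
    (hf : F =O[nhds 0] fun z : ℂ => ‖z‖ ^ k) (μ : ℂ) :
    (fun h : ℝ => F ((h : ℂ) * μ)) =O[nhds 0] fun h : ℝ => h ^ k := by
  have ht : Filter.Tendsto (fun h : ℝ => (h : ℂ) * μ) (nhds 0) (nhds 0) := by
    have hc : Continuous fun h : ℝ => (h : ℂ) * μ := by fun_prop
    have := hc.tendsto 0
    simpa using this
  have H := hf.comp_tendsto ht
  refine H.trans (IsBigO.of_bound (‖μ‖ ^ k) ?_)
  filter_upwards with h
  have heq : ‖‖(h : ℂ) * μ‖ ^ k‖ = ‖μ‖ ^ k * ‖h ^ k‖ := by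
    rw [Real.norm_of_nonneg (by positivity), norm_mul, Complex.norm_real, Real.norm_eq_abs,
      Real.norm_eq_abs, abs_pow, mul_pow]
    ring
  exact le_of_eq heq

theorem sc15_key (A B : 𝔸) (c d : ℂ) (h1 : d + c = 1) (h3 : d ^ 3 + c ^ 3 = 0) :
    (fun h : ℝ =>
        exp (((h : ℂ) * Complex.I * (d / 2)) • B) *
        exp (((h : ℂ) * Complex.I * d) • A) *
        exp (((h : ℂ) * Complex.I * (1 / 2 : ℂ)) • B) *
        exp (((h : ℂ) * Complex.I * c) • A) *
        exp (((h : ℂ) * Complex.I * (c / 2)) • B)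
        - exp (((h : ℂ) * Complex.I) • (A + B))) =O[nhds 0] fun h : ℝ => h ^ 4 := by
  obtain ⟨q, hq⟩ := sc15Psi_analyticAt A B
  have hqAt := hq
  obtain ⟨r, hqr⟩ := hq
  set ψ := q.coeff 3 with hψdef
  have hder : deriv (sc15Psi A B) = sc15Psi1 A B :=
    funext fun z => (sc15Psi_hasDerivAt A B z).deriv
  -- the first three coefficients vanish
  have hq0 : q.coeff 0 = 0 := by
    have h := hqAt.coeff_zero fun _ => (1 : ℂ)
    rw [sc15Psi_zero] at h
    exact h
  have hcoeff : ∀ n : ℕ, n.factorial • q.coeff n = iteratedDeriv n (sc15Psi A B) 0 := by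
    intro n
    rw [iteratedDeriv_eq_iteratedFDeriv]
    exact hqr.factorial_smul 1 n
  have hq1 : q.coeff 1 = 0 := by
    have h := hcoeff 1
    rw [iteratedDeriv_one, hder, sc15Psi1_zero] at h
    simpa using h
  have hq2 : q.coeff 2 = 0 := by
    have h := hcoeff 2
    have e2 : iteratedDeriv 2 (sc15Psi A B) = deriv (iteratedDeriv 1 (sc15Psi A B)) :=
      iteratedDeriv_succ
    rw [e2, iteratedDeriv_one, hder] at h
    rw [(sc15Psi1_hasDerivAt A B 0).deriv, sc15Psi2_zero] at h
    rw [← Nat.cast_smul_eq_nsmul ℂ] at h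
    rcases smul_eq_zero.mp h with h' | h'
    · norm_num [Nat.factorial] at h'
    · exact h'
  -- Taylor remainder estimates for Ψ
  have hps : ∀ y : ℂ, q.partialSum 4 y = y ^ 3 • ψ := by
    intro y
    simp [FormalMultilinearSeries.partialSum, Finset.sum_range_succ,
      FormalMultilinearSeries.apply_eq_pow_smul_coeff, hq0, hq1, hq2, ← hψdef]
  have P1 : (fun y : ℂ => sc15Psi A B y - y ^ 3 • ψ) =O[nhds 0] fun y : ℂ => ‖y‖ ^ 4 := by
    have H := hqAt.isBigO_sub_partialSum_pow 4
    simp only [zero_add, hps] at H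
    exact H
  have hsmO : (fun y : ℂ => y ^ 3 • ψ) =O[nhds 0] fun y : ℂ => ‖y‖ ^ 3 := by
    refine IsBigO.of_bound ‖ψ‖ ?_
    filter_upwards with y
    rw [norm_smul, norm_pow, Real.norm_of_nonneg (by positivity)]
    ring_nf
    exact le_of_eq (by ring)
  have h43 : (fun y : ℂ => ‖y‖ ^ 4) =O[nhds 0] fun y : ℂ => ‖y‖ ^ 3 := by
    refine IsBigO.of_bound 1 ?_
    filter_upwards [Metric.ball_mem_nhds (0 : ℂ) one_pos] with y hy
    rw [mem_ball_zero_iff] at hy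
    rw [Real.norm_of_nonneg (by positivity), Real.norm_of_nonneg (by positivity), one_mul]
    exact pow_le_pow_of_le_one (norm_nonneg _) hy.le (by norm_num)
  have PsiO3 : (fun y : ℂ => sc15Psi A B y) =O[nhds 0] fun y : ℂ => ‖y‖ ^ 3 := by
    have H := (P1.trans h43).add hsmO
    simpa using H
  -- the elementary factor bound
  have hE : (fun z : ℂ => exp (z • (A + B)) - 1) =O[nhds 0] fun z : ℂ => ‖z‖ ^ 1 := by
    have hd := (hasDerivAt_exp_smul_const' (A + B) (0 : ℂ)).hasFDerivAt.isBigO_sub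
    simp only [zero_smul, exp_zero, sub_zero] at hd
    have := hd.norm_right
    simpa [pow_one] using this
  -- composed bounds
  have cA1 := sc15_comp hE (Complex.I * d)
  have cA2 := sc15_comp hE (Complex.I * c)
  have cP3d := sc15_comp PsiO3 (Complex.I * d)
  have cP3c := sc15_comp PsiO3 (Complex.I * c)
  have cP4d := sc15_comp P1 (Complex.I * d)
  have cP4c := sc15_comp P1 (Complex.I * c)
  have pow13 : (fun h : ℝ => h ^ 1 * h ^ 3) = fun h : ℝ => h ^ 4 := funext fun h => by ring
  have pow31 : (fun h : ℝ => h ^ 3 * h ^ 1) = fun h : ℝ => h ^ 4 := funext fun h => by ring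
  have T1 : (fun h : ℝ => (exp (((h : ℂ) * (Complex.I * d)) • (A + B)) - 1) *
      sc15Psi A B ((h : ℂ) * (Complex.I * c))) =O[nhds 0] fun h : ℝ => h ^ 4 := by
    have := cA1.mul cP3c
    rwa [pow13] at this
  have T2 : (fun h : ℝ => sc15Psi A B ((h : ℂ) * (Complex.I * d)) *
      (exp (((h : ℂ) * (Complex.I * c)) • (A + B)) - 1)) =O[nhds 0] fun h : ℝ => h ^ 4 := by
    have := cP3d.mul cA2
    rwa [pow31] at this
  have h64 : (fun h : ℝ => h ^ 3 * h ^ 3) =O[nhds 0] fun h : ℝ => h ^ 4 := by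
    refine IsBigO.of_bound 1 ?_
    filter_upwards [Metric.ball_mem_nhds (0 : ℝ) one_pos] with h hh
    rw [mem_ball_zero_iff] at hh
    rw [Real.norm_eq_abs, Real.norm_eq_abs, one_mul]
    have e : |h ^ 3 * h ^ 3| = |h| ^ 6 := by rw [abs_mul, abs_pow]; ring
    rw [e, abs_pow]
    exact pow_le_pow_of_le_one (abs_nonneg _) hh.le (by norm_num)
  have T3 : (fun h : ℝ => sc15Psi A B ((h : ℂ) * (Complex.I * d)) *
      sc15Psi A B ((h : ℂ) * (Complex.I * c))) =O[nhds 0] fun h : ℝ => h ^ 4 :=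
    (cP3d.mul cP3c).trans h64
  have TOT := ((T1.add T2).add T3).add (cP4d.add cP4c)
  -- identify the goal function with the sum above
  have hfe : (fun h : ℝ =>
        exp (((h : ℂ) * Complex.I * (d / 2)) • B) *
        exp (((h : ℂ) * Complex.I * d) • A) *
        exp (((h : ℂ) * Complex.I * (1 / 2 : ℂ)) • B) *
        exp (((h : ℂ) * Complex.I * c) • A) *
        exp (((h : ℂ) * Complex.I * (c / 2)) • B)
        - exp (((h : ℂ) * Complex.I) • (A + B))) = (fun h : ℝ =>
        (exp (((h : ℂ) * (Complex.I * d)) • (A + B)) - 1) *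
            sc15Psi A B ((h : ℂ) * (Complex.I * c)) +
          sc15Psi A B ((h : ℂ) * (Complex.I * d)) *
            (exp (((h : ℂ) * (Complex.I * c)) • (A + B)) - 1) +
          sc15Psi A B ((h : ℂ) * (Complex.I * d)) * sc15Psi A B ((h : ℂ) * (Complex.I * c)) +
          ((sc15Psi A B ((h : ℂ) * (Complex.I * d)) - ((h : ℂ) * (Complex.I * d)) ^ 3 • ψ) +
            (sc15Psi A B ((h : ℂ) * (Complex.I * c)) - ((h : ℂ) * (Complex.I * c)) ^ 3 • ψ))) := by
    funext h
    have k1 : ((h : ℂ) * Complex.I * (d / 2)) • B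
        = ((h : ℂ) * (Complex.I * d)) • ((2⁻¹ : ℂ) • B) := by
      rw [smul_smul]; congr 1; ring
    have k2 : ((h : ℂ) * Complex.I * d) • A = ((h : ℂ) * (Complex.I * d)) • A := by
      congr 1; ring
    have k4 : ((h : ℂ) * Complex.I * c) • A = ((h : ℂ) * (Complex.I * c)) • A := by
      congr 1; ring
    have k5 : ((h : ℂ) * Complex.I * (c / 2)) • B
        = ((h : ℂ) * (Complex.I * c)) • ((2⁻¹ : ℂ) • B) := by
      rw [smul_smul]; congr 1; ring
    have k3 : exp (((h : ℂ) * Complex.I * (1 / 2 : ℂ)) • B)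
        = exp (((h : ℂ) * (Complex.I * d)) • ((2⁻¹ : ℂ) • B)) *
          exp (((h : ℂ) * (Complex.I * c)) • ((2⁻¹ : ℂ) • B)) := by
      rw [← NormedSpace.exp_add_of_commute_of_mem_ball (𝕂 := ℂ) (((Commute.refl ((2⁻¹ : ℂ) • B)).smul_left
        ((h : ℂ) * (Complex.I * d))).smul_right ((h : ℂ) * (Complex.I * c))) ((by rw [expSeries_radius_eq_top]; exact edist_lt_top _ _))
        ((by rw [expSeries_radius_eq_top]; exact edist_lt_top _ _))]
      congr 1
      rw [smul_smul, smul_smul, ← add_smul]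
      congr 1
      linear_combination (-((h : ℂ) * Complex.I) / 2) * h1
    have k6 : exp (((h : ℂ) * Complex.I) • (A + B))
        = exp (((h : ℂ) * (Complex.I * d)) • (A + B)) *
          exp (((h : ℂ) * (Complex.I * c)) • (A + B)) := by
      rw [← NormedSpace.exp_add_of_commute_of_mem_ball (𝕂 := ℂ) (((Commute.refl (A + B)).smul_left
        ((h : ℂ) * (Complex.I * d))).smul_right ((h : ℂ) * (Complex.I * c))) ((by rw [expSeries_radius_eq_top]; exact edist_lt_top _ _))
        ((by rw [expSeries_radius_eq_top]; exact edist_lt_top _ _))]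
      congr 1
      rw [← add_smul]
      congr 1
      linear_combination (-((h : ℂ) * Complex.I)) * h1
    have hzz : ((h : ℂ) * (Complex.I * d)) ^ 3 • ψ + ((h : ℂ) * (Complex.I * c)) ^ 3 • ψ
        = 0 := by
      rw [← add_smul,
        show ((h : ℂ) * (Complex.I * d)) ^ 3 + ((h : ℂ) * (Complex.I * c)) ^ 3 = 0 by
          linear_combination ((h : ℂ) * Complex.I) ^ 3 * h3,
        zero_smul]
    rw [k1, k2, k3, k4, k5, k6, sub_add_sub_comm, hzz, sub_zero]
    simp only [sc15Psi, sc15Phi, sc15foo, one_mul]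
    noncomm_ring
  rw [hfe]
  exact TOT

end AuxAlg

lemma sc15_matrix_bound {N : ℕ} (A B : Matrix (Fin N) (Fin N) ℂ) (c d : ℂ)
    (h1 : d + c = 1) (h3 : d ^ 3 + c ^ 3 = 0) :
    ∃ C : ℝ, ∀ᶠ h : ℝ in nhds 0, ∀ i j,
      ‖(NormedSpace.exp (((h : ℂ) * Complex.I * (d / 2)) • B) *
        NormedSpace.exp (((h : ℂ) * Complex.I * d) • A) *
        NormedSpace.exp (((h : ℂ) * Complex.I * (1 / 2 : ℂ)) • B) *
        NormedSpace.exp (((h : ℂ) * Complex.I * c) • A) *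
        NormedSpace.exp (((h : ℂ) * Complex.I * (c / 2)) • B)
        - NormedSpace.exp (((h : ℂ) * Complex.I) • (A + B))) i j‖ ≤ C * ‖h ^ 4‖ := by
  letI : SeminormedRing (Matrix (Fin N) (Fin N) ℂ) := Matrix.linftyOpSemiNormedRing
  letI : NormedRing (Matrix (Fin N) (Fin N) ℂ) := Matrix.linftyOpNormedRing
  letI : NormedAlgebra ℂ (Matrix (Fin N) (Fin N) ℂ) := Matrix.linftyOpNormedAlgebra
  have hO := sc15_key A B c d h1 h3
  rw [isBigO_iff] at hO
  obtain ⟨C, hC⟩ := hO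
  refine ⟨C, ?_⟩
  filter_upwards [hC] with h hh i j
  refine le_trans (le_trans ?_ (le_refl _)) hh
  -- entrywise bound by the L∞-operator norm
  set M := NormedSpace.exp (((h : ℂ) * Complex.I * (d / 2)) • B) *
        NormedSpace.exp (((h : ℂ) * Complex.I * d) • A) *
        NormedSpace.exp (((h : ℂ) * Complex.I * (1 / 2 : ℂ)) • B) *
        NormedSpace.exp (((h : ℂ) * Complex.I * c) • A) *
        NormedSpace.exp (((h : ℂ) * Complex.I * (c / 2)) • B)
        - NormedSpace.exp (((h : ℂ) * Complex.I) • (A + B)) with hM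
  have : ‖M i j‖₊ ≤ ‖M‖₊ := by
    rw [Matrix.linfty_opNNNorm_def]
    calc ‖M i j‖₊ ≤ ∑ j', ‖M i j'‖₊ :=
          Finset.single_le_sum (f := fun j' => ‖M i j'‖₊) (fun _ _ => zero_le)
            (Finset.mem_univ j)
      _ ≤ _ := Finset.le_sup (f := fun i => ∑ j', ‖M i j'‖₊) (Finset.mem_univ i)
  exact_mod_cast this

attribute [local instance] Matrix.normedAddCommGroup Matrix.normedSpace

/-- For complex `N × N` matrices `A` and `B`, the symmetric-conjugate
splitting operator
`S_h = e^{i h conj(b₀) B} e^{i h conj(a₁) A} e^{i h b₁ B} e^{i h a₁ A} e^{i h b₀ B}`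
with `a₁ = 1/2 + i √3/6`, `b₀ = a₁/2`, `b₁ = 1/2`, is a third-order approximation to
`exp (i h (A + B))`:  `S_h = exp (i h (A + B)) + O(h⁴)` as `h → 0`. -/
theorem stmt_15 {N : ℕ} (A B : Matrix (Fin N) (Fin N) ℂ) :
    (fun h : ℝ =>
        NormedSpace.exp (((h : ℂ) * Complex.I * starRingEnd ℂ coeffB0) • B) *
        NormedSpace.exp (((h : ℂ) * Complex.I * starRingEnd ℂ coeffA1) • A) *
        NormedSpace.exp (((h : ℂ) * Complex.I * coeffB1) • B) *
        NormedSpace.exp (((h : ℂ) * Complex.I * coeffA1) • A) *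
        NormedSpace.exp (((h : ℂ) * Complex.I * coeffB0) • B)
        - NormedSpace.exp (((h : ℂ) * Complex.I) • (A + B)))
      =O[nhds 0] fun h : ℝ => h ^ 4 := by
  have hu : ((Real.sqrt 3 : ℝ) : ℂ) ^ 2 = 3 := by
    norm_cast
    exact Real.sq_sqrt (by norm_num)
  have hconj : (starRingEnd ℂ) coeffA1
      = (1 / 2 : ℂ) - ((Real.sqrt 3 / 6 : ℝ) : ℂ) * Complex.I := by
    rw [coeffA1, map_add, _root_.map_mul, Complex.conj_I, Complex.conj_ofReal,
      show (starRingEnd ℂ) (1 / 2 : ℂ) = 1 / 2 by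
        rw [map_div₀, _root_.map_one, _root_.map_ofNat]]
    ring
  have h1 : (starRingEnd ℂ) coeffA1 + coeffA1 = 1 := by
    rw [hconj, coeffA1]
    ring
  have h3 : ((starRingEnd ℂ) coeffA1) ^ 3 + coeffA1 ^ 3 = 0 := by
    rw [hconj, coeffA1]
    push_cast
    linear_combination (Complex.I ^ 2 / 12) * hu + (1 / 4 : ℂ) * Complex.I_sq
  obtain ⟨C, hC⟩ := sc15_matrix_bound A B coeffA1 ((starRingEnd ℂ) coeffA1) h1 h3
  rw [isBigO_iff]
  refine ⟨|C|, ?_⟩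
  filter_upwards [hC] with h hh
  have hb0 : (starRingEnd ℂ) coeffB0 = (starRingEnd ℂ) coeffA1 / 2 := by
    rw [coeffB0, map_div₀, _root_.map_ofNat]
  rw [hb0, show coeffB1 = (1 / 2 : ℂ) from rfl, show coeffB0 = coeffA1 / 2 from rfl]
  rw [Matrix.norm_le_iff (by positivity)]
  intro i j
  exact (hh i j).trans (mul_le_mul_of_nonneg_right (le_abs_self C) (norm_nonneg _))
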